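/- Let γ ≥ 1 and h ∈ (0,1], let 𝒫 be the projection operator, let f : ℝ^d → ℝ^d satisfy ‖f(y)‖ ≤ C₂(1 + ‖y‖)^{γ} for all y ∈ ℝ^d, and let g : ℝ^d → ℝ^{d×m} satisfy, for some p₀ ≥ 1 and L₁ ∈ ℝ, the coercivity condition 2⟨y, f(y)⟩ + (2p₀ − 1)‖g(y)‖² ≤ L₁(1 + ‖y‖²) for all y ∈ ℝ^d. Then, with C_f := 2^{γ} C₂, for every x ∈ ℝ^d: ‖g(𝒫(x))‖² ≤ (L₁/(2p₀ − 1))·(1 + ‖𝒫(x)‖²) + 2 C_f h^{−1/2}‖𝒫(x)‖. -/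
import Mathlib


open scoped RealInnerProductSpace BigOperators

/-- The projection operator `𝒫(x) = min {1, h^{-1/(2γ)} ‖x‖⁻¹} • x`
(with `𝒫(0) = 0`, since in `ℝ` we have `0⁻¹ = 0`). -/
noncomputable def proj {d : ℕ} (γ h : ℝ) (x : EuclideanSpace ℝ (Fin d)) :
    EuclideanSpace ℝ (Fin d) :=
  min 1 (h ^ (-(1 : ℝ) / (2 * γ)) * ‖x‖⁻¹) • x

/-- Under the coercivity condition (the diffusion matrix `g` is encoded by
its columns `g j`, so that its squared Frobenius norm is `∑ j, ‖g j x‖²`), the estimate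
`‖g(𝒫(x))‖² ≤ L₁/(2p₀ - 1) (1 + ‖𝒫(x)‖²) + 2 C_f h^{-1/2} ‖𝒫(x)‖` holds with
`C_f = 2^γ C₂`. -/
theorem stmt_7 {d m : ℕ} (γ h : ℝ) (hγ : 1 ≤ γ) (hh0 : 0 < h) (hh1 : h ≤ 1)
    (C₂ : ℝ) (hC₂ : 0 ≤ C₂)
    (f : EuclideanSpace ℝ (Fin d) → EuclideanSpace ℝ (Fin d))
    (g : Fin m → EuclideanSpace ℝ (Fin d) → EuclideanSpace ℝ (Fin d))
    (hf : ∀ y : EuclideanSpace ℝ (Fin d), ‖f y‖ ≤ C₂ * (1 + ‖y‖) ^ γ)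
    (p₀ L₁ : ℝ) (hp₀ : 1 ≤ p₀)
    (hcoer : ∀ y : EuclideanSpace ℝ (Fin d),
      2 * ⟪y, f y⟫ + (2 * p₀ - 1) * ∑ j, ‖g j y‖ ^ 2 ≤ L₁ * (1 + ‖y‖ ^ 2)) :
    ∀ x : EuclideanSpace ℝ (Fin d),
      ∑ j, ‖g j (proj γ h x)‖ ^ 2 ≤
        L₁ / (2 * p₀ - 1) * (1 + ‖proj γ h x‖ ^ 2)
          + 2 * ((2 : ℝ) ^ γ * C₂) * h ^ (-(1 : ℝ) / 2) * ‖proj γ h x‖ := by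
  intro x
  have hγ0 : 0 < γ := lt_of_lt_of_le one_pos hγ
  set c : ℝ := h ^ (-(1 : ℝ) / (2 * γ)) with hc
  have hc0 : 0 < c := Real.rpow_pos_of_pos hh0 _
  have hc1 : 1 ≤ c := by
    apply Real.one_le_rpow_of_pos_of_le_one_of_nonpos hh0 hh1
    have : 0 < 2 * γ := by linarith
    rw [div_nonpos_iff]
    right; constructor <;> linarith
  set y := proj γ h x with hy
  have hny : ‖y‖ ≤ c := by
    rw [hy, proj, norm_smul]
    rcases eq_or_ne x 0 with h0 | h0
    · simpa [h0] using hc0.le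
    · have hx0 : 0 < ‖x‖ := norm_pos_iff.mpr h0
      have hm : min 1 (c * ‖x‖⁻¹) ≤ c * ‖x‖⁻¹ := min_le_right _ _
      have hmn : 0 ≤ min 1 (c * ‖x‖⁻¹) := le_min zero_le_one (by positivity)
      calc |min 1 (c * ‖x‖⁻¹)| * ‖x‖ = min 1 (c * ‖x‖⁻¹) * ‖x‖ := by
            rw [abs_of_nonneg hmn]
        _ ≤ c * ‖x‖⁻¹ * ‖x‖ := mul_le_mul_of_nonneg_right hm hx0.le
        _ = c := by field_simp
  have hny0 : 0 ≤ ‖y‖ := norm_nonneg _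
  have hrp : (1 + ‖y‖) ^ γ ≤ 2 ^ γ * h ^ (-(1 : ℝ) / 2) := by
    have h1 : 1 + ‖y‖ ≤ 2 * c := by linarith
    calc (1 + ‖y‖) ^ γ ≤ (2 * c) ^ γ :=
          Real.rpow_le_rpow (by positivity) h1 hγ0.le
      _ = 2 ^ γ * c ^ γ := Real.mul_rpow (by norm_num) hc0.le
      _ = 2 ^ γ * h ^ (-(1 : ℝ) / 2) := by
          have he : -1 / (2 * γ) * γ = -1 / 2 := by
            rw [div_mul_eq_mul_div, mul_comm (-1 : ℝ) γ, mul_comm (2 : ℝ) γ,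
              mul_div_mul_left _ _ hγ0.ne']
          rw [hc, ← Real.rpow_mul hh0.le, he]
  have hfy := hf y
  have hkey := hcoer y
  have hinner : -(‖y‖ * ‖f y‖) ≤ ⟪y, f y⟫ :=
    (abs_le.mp (abs_real_inner_le_norm y (f y))).1
  set S : ℝ := ∑ j, ‖g j y‖ ^ 2 with hS
  set T : ℝ := 2 * ((2 : ℝ) ^ γ * C₂) * h ^ (-(1 : ℝ) / 2) * ‖y‖ with hT
  have hT0 : 0 ≤ T := by
    have : (0:ℝ) ≤ (2:ℝ) ^ γ := (Real.rpow_pos_of_pos two_pos γ).le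
    have : (0:ℝ) ≤ h ^ (-(1:ℝ)/2) := (Real.rpow_pos_of_pos hh0 _).le
    positivity
  have hD1 : (1:ℝ) ≤ 2 * p₀ - 1 := by linarith
  have hD0 : (0:ℝ) < 2 * p₀ - 1 := by linarith
  have hmain : (2 * p₀ - 1) * S ≤ L₁ * (1 + ‖y‖ ^ 2) + T := by
    have hfy' : 2 * (‖y‖ * ‖f y‖) ≤ T := by
      rw [hT]
      have h2 : ‖f y‖ ≤ (2:ℝ) ^ γ * C₂ * h ^ (-(1:ℝ)/2) := by
        calc ‖f y‖ ≤ C₂ * (1 + ‖y‖) ^ γ := hfy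
          _ ≤ C₂ * (2 ^ γ * h ^ (-(1 : ℝ) / 2)) := by
              apply mul_le_mul_of_nonneg_left hrp hC₂
          _ = (2:ℝ) ^ γ * C₂ * h ^ (-(1:ℝ)/2) := by ring
      nlinarith [mul_le_mul_of_nonneg_left h2 hny0]
    nlinarith
  have hQ : L₁ / (2 * p₀ - 1) * (2 * p₀ - 1) = L₁ := div_mul_cancel₀ _ hD0.ne'
  nlinarith [mul_nonneg (sub_nonneg.mpr hD1) hT0, hmain, hQ,
    mul_pos hD0 hD0]
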